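/- For a diagonal map between Hilbert spaces: let H, K be separable Hilbert spaces with orthonormal bases (e_n), (f_n) and let T: H → K be bounded with T e_n = σ_n f_n, where σ_n ≥ 0 is nonincreasing and σ_n → 0. Then the n-th Kolmogorov diameter of T(B_H) with respect to B_K equals σ_n. -/

import Mathlib

/-!
Write `x = ∑ cₖ eₖ`, so that `T x = ∑ σₖ cₖ fₖ`. Discarding the first `n` terms leaves a vector of
norm at most `σₙ ‖x‖` because `σ` is nonincreasing, so `T(B_H) ⊆ σₙ B_K + span {f₀, …, fₙ₋₁}`.
Conversely `T(B_H)` contains the `σₙ`-ball of the `(n+1)`-dimensional space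
`E = span {f₀, …, fₙ}`. An `n`-dimensional `F` misses some unit vector `y ∈ E ∩ Fᗮ`, and pairing
a decomposition `σₙ y = δ w + g` (`‖w‖ ≤ 1`, `g ∈ F`) with `y` gives `σₙ ≤ δ`.
-/

open Pointwise Filter

/-- The `n`-th Kolmogorov diameter of `A` with respect to `B` (complex subspaces). -/
noncomputable def kolDiam {X : Type*} [AddCommGroup X] [Module ℂ X] [Module ℝ X]
    (n : ℕ) (A B : Set X) : ℝ :=
  sInf {δ : ℝ | 0 < δ ∧ ∃ F : Submodule ℂ X, FiniteDimensional ℂ F ∧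
    Module.finrank ℂ F ≤ n ∧ A ⊆ δ • B + (F : Set X)}

open Module Metric

namespace HilbertBasis

variable {ι 𝕜 E E' : Type*} [RCLike 𝕜]
  [NormedAddCommGroup E] [InnerProductSpace 𝕜 E] [NormedAddCommGroup E'] [InnerProductSpace 𝕜 E']

theorem repr_sum_smul [DecidableEq ι] (b : HilbertBasis ι 𝕜 E) (s : Finset ι) (a : ι → 𝕜)
    (k : ι) : b.repr (∑ i ∈ s, a i • b i) k = if k ∈ s then a k else 0 := by
  rw [b.repr_apply_apply]
  split_ifs with hk
  · exact b.orthonormal.inner_right_sum a hk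
  · simp [inner_sum, inner_smul_right, orthonormal_iff_ite.mp b.orthonormal, hk]

theorem norm_le_of_norm_repr_le (b : HilbertBasis ι 𝕜 E) (b' : HilbertBasis ι 𝕜 E') {c : ℝ}
    (hc : 0 ≤ c) {u : E} {x : E'} (h : ∀ i, ‖b.repr u i‖ ≤ c * ‖b'.repr x i‖) :
    ‖u‖ ≤ c * ‖x‖ :=
  calc ‖u‖ = ‖b.repr u‖ := (b.repr.norm_map u).symm
    _ ≤ ‖(c : 𝕜) • b'.repr x‖ := lp.norm_mono two_ne_zero fun i => by
        simpa [norm_smul, abs_of_nonneg hc] using h i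
    _ = c * ‖x‖ := by rw [norm_smul, RCLike.norm_ofReal, abs_of_nonneg hc, b'.repr.norm_map]

theorem repr_apply_of_apply_eq_smul (b : HilbertBasis ι 𝕜 E) (b' : HilbertBasis ι 𝕜 E')
    {T : E →L[𝕜] E'} {s : ι → 𝕜} (hT : ∀ i, T (b i) = s i • b' i) (x : E) (i : ι) :
    b'.repr (T x) i = s i * b.repr x i := by
  classical
  suffices (innerSL 𝕜 (b' i)).comp T = s i • innerSL 𝕜 (b i) by
    simpa [b.repr_apply_apply, b'.repr_apply_apply] using congr($this x)
  refine ContinuousLinearMap.ext_on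
    (Submodule.dense_iff_topologicalClosure_eq_top.mpr b.dense_span) ?_
  rintro _ ⟨k, rfl⟩
  simp only [ContinuousLinearMap.comp_apply, innerSL_apply_apply, hT, inner_smul_right,
    smul_apply, smul_eq_mul, orthonormal_iff_ite.mp b.orthonormal,
    orthonormal_iff_ite.mp b'.orthonormal]
  split_ifs with h <;> simp [h]

theorem finrank_span_finset_image [DecidableEq E] (b : HilbertBasis ι 𝕜 E) (s : Finset ι) :
    finrank 𝕜 (Submodule.span 𝕜 (s.image b : Set E)) = s.card := by
  have hb := b.orthonormal.linearIndependent
  rw [finrank_span_finset_eq_card (((linearIndepOn_id_range_iff hb.injective).mpr hb).mono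
    (by simp)), Finset.card_image_of_injective _ hb.injective]

end HilbertBasis

theorem subset_smul_closedBall_add_of_forall_exists_norm_sub_le {X : Type*}
    [NormedAddCommGroup X] [NormedSpace ℝ X] {A F : Set X} {δ : ℝ} (hδ : 0 ≤ δ)
    (h : ∀ a ∈ A, ∃ v ∈ F, ‖a - v‖ ≤ δ) : A ⊆ δ • closedBall 0 1 + F := by
  intro a ha
  obtain ⟨v, hv, hav⟩ := h a ha
  rw [_root_.smul_closedBall _ _ zero_le_one, smul_zero, Real.norm_of_nonneg hδ, mul_one]
  exact ⟨a - v, mem_closedBall_zero_iff.mpr hav, v, hv, sub_add_cancel a v⟩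

theorem Submodule.exists_norm_eq_one_mem_orthogonal_of_finrank_lt {𝕜 K : Type*} [RCLike 𝕜]
    [NormedAddCommGroup K] [InnerProductSpace 𝕜 K] {E F : Submodule 𝕜 K}
    [FiniteDimensional 𝕜 E] [FiniteDimensional 𝕜 F] (h : finrank 𝕜 F < finrank 𝕜 E) :
    ∃ y ∈ E, y ∈ Fᗮ ∧ ‖y‖ = 1 := by
  obtain ⟨z, hz, hz0⟩ := Submodule.exists_mem_ne_zero_of_ne_bot
    (LinearMap.ker_ne_bot_of_finrank_lt
      (f := (F.orthogonalProjectionOnto : K →ₗ[𝕜] F) ∘ₗ E.subtype) h)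
  have hzF : (z : K) ∈ Fᗮ := Submodule.orthogonalProjectionOnto_eq_zero_iff.mp hz
  refine ⟨(‖(z : K)‖⁻¹ : 𝕜) • (z : K), E.smul_mem _ z.2, Fᗮ.smul_mem _ hzF, norm_smul_inv_norm ?_⟩
  exact_mod_cast hz0

theorem le_of_forall_mem_of_subset_smul_closedBall_add {K : Type*} [NormedAddCommGroup K]
    [InnerProductSpace ℂ K] {A : Set K} {E F : Submodule ℂ K} [FiniteDimensional ℂ E]
    [FiniteDimensional ℂ F] (hEF : finrank ℂ F < finrank ℂ E) {r δ : ℝ} (hr : 0 ≤ r)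
    (hδ : 0 ≤ δ) (hE : ∀ y ∈ E, ‖y‖ ≤ r → y ∈ A) (hA : A ⊆ δ • closedBall 0 1 + (F : Set K)) :
    r ≤ δ := by
  obtain ⟨y, hyE, hyF, hy⟩ := Submodule.exists_norm_eq_one_mem_orthogonal_of_finrank_lt hEF
  obtain ⟨_, ⟨w, hw, rfl⟩, g, hg, hsum⟩ := hA (hE (r • y) (E.smul_of_tower_mem r hyE)
    (by rw [norm_smul, hy, Real.norm_of_nonneg hr, mul_one]))
  have hr_eq : r = δ * RCLike.re (inner ℂ y w) := by
    have := congr(RCLike.re (inner ℂ y $hsum))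
    simpa [inner_add_right, Submodule.inner_left_of_mem_orthogonal hg hyF,
      ← RCLike.real_smul_eq_coe_smul, inner_smul_real_right, hy] using this.symm
  calc r = δ * RCLike.re (inner ℂ y w) := hr_eq
    _ ≤ δ * (‖y‖ * ‖w‖) := mul_le_mul_of_nonneg_left (re_inner_le_norm y w) hδ
    _ ≤ δ := by rw [hy, one_mul]; exact mul_le_of_le_one_right hδ (mem_closedBall_zero_iff.mp hw)

section Diagonal

open Finset

variable {𝕜 H K : Type*} [RCLike 𝕜] [NormedAddCommGroup H] [InnerProductSpace 𝕜 H]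
  [NormedAddCommGroup K] [InnerProductSpace 𝕜 K] [DecidableEq K]
  (e : HilbertBasis ℕ 𝕜 H) (f : HilbertBasis ℕ 𝕜 K) {T : H →L[𝕜] K} {σ : ℕ → ℝ}

theorem exists_mem_span_norm_map_sub_le_of_diagonal (hσ : Antitone σ) (hσ0 : ∀ n, 0 ≤ σ n)
    (hT : ∀ n, T (e n) = (σ n : 𝕜) • f n) (n : ℕ) (x : H) :
    ∃ v ∈ Submodule.span 𝕜 ((range n).image f : Set K), ‖T x - v‖ ≤ σ n * ‖x‖ := by
  refine ⟨∑ i ∈ range n, (σ i * e.repr x i : 𝕜) • f i,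
    Submodule.sum_mem _ fun i hi => Submodule.smul_mem _ _
      (Submodule.subset_span (mem_coe.mpr (mem_image_of_mem f hi))),
    f.norm_le_of_norm_repr_le e (hσ0 n) fun k => ?_⟩
  rw [map_sub, lp.coeFn_sub, Pi.sub_apply, e.repr_apply_of_apply_eq_smul f hT, f.repr_sum_smul]
  split_ifs with hk
  · simpa using mul_nonneg (hσ0 n) (norm_nonneg _)
  · rw [sub_zero, norm_mul, RCLike.norm_ofReal, abs_of_nonneg (hσ0 k)]
    exact mul_le_mul_of_nonneg_right (hσ (by simpa using hk)) (norm_nonneg _)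

theorem mem_image_closedBall_of_mem_span_of_diagonal (hσ : Antitone σ)
    (hT : ∀ n, T (e n) = (σ n : 𝕜) • f n) {n : ℕ} (hσn : 0 < σ n) {y : K}
    (hy : y ∈ Submodule.span 𝕜 ((range (n + 1)).image f : Set K)) (hyn : ‖y‖ ≤ σ n) :
    y ∈ T '' closedBall 0 1 := by
  have hσpos : ∀ i ∈ range (n + 1), 0 < σ i :=
    fun i hi => hσn.trans_le (hσ (Nat.lt_succ_iff.mp (mem_range.mp hi)))
  obtain ⟨c, -, hc⟩ := Submodule.mem_span_finset.mp hy
  rw [sum_image fun i _ j _ h => f.orthonormal.linearIndependent.injective h] at hc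
  subst hc
  refine ⟨∑ i ∈ range (n + 1), (c (f i) / σ i : 𝕜) • e i, mem_closedBall_zero_iff.mpr ?_, ?_⟩
  · refine (e.norm_le_of_norm_repr_le f (inv_nonneg.mpr hσn.le) fun k => ?_).trans
      ((inv_mul_le_iff₀ hσn).mpr (by rwa [mul_one]))
    rw [e.repr_sum_smul, f.repr_sum_smul]
    split_ifs with hk
    · rw [norm_div, RCLike.norm_ofReal, abs_of_pos (hσpos k hk), div_eq_inv_mul]
      exact mul_le_mul_of_nonneg_right
        (inv_anti₀ hσn (hσ (Nat.lt_succ_iff.mp (mem_range.mp hk)))) (norm_nonneg _)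
    · simp
  · simp only [map_sum, map_smul, hT, smul_smul]
    refine sum_congr rfl fun i hi => ?_
    rw [div_mul_cancel₀ _ (by exact_mod_cast (hσpos i hi).ne')]

end Diagonal

theorem stmt_14_general {H K : Type*}
    [NormedAddCommGroup H] [InnerProductSpace ℂ H]
    [NormedAddCommGroup K] [InnerProductSpace ℂ K]
    (e : HilbertBasis ℕ ℂ H) (f : HilbertBasis ℕ ℂ K)
    (T : H →L[ℂ] K) (σ : ℕ → ℝ)
    (hσanti : Antitone σ) (hσ0 : ∀ n, 0 ≤ σ n)
    (hT : ∀ n : ℕ, T (e n) = (σ n : ℂ) • f n) :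
    ∀ n : ℕ, kolDiam n (T '' Metric.closedBall 0 1) (Metric.closedBall 0 1) = σ n := by
  classical
  intro n
  have hadmissible : ∀ δ, σ n < δ → 0 < δ ∧ ∃ F : Submodule ℂ K, FiniteDimensional ℂ F ∧
      finrank ℂ F ≤ n ∧ T '' closedBall 0 1 ⊆ δ • closedBall 0 1 + (F : Set K) := by
    refine fun δ hδ => ⟨(hσ0 n).trans_lt hδ, _, inferInstance,
      (f.finrank_span_finset_image _).trans_le (Finset.card_range n).le,
      subset_smul_closedBall_add_of_forall_exists_norm_sub_le ((hσ0 n).trans hδ.le) ?_⟩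
    rintro _ ⟨x, hx, rfl⟩
    obtain ⟨v, hv, hTxv⟩ := exists_mem_span_norm_map_sub_le_of_diagonal e f hσanti hσ0 hT n x
    exact ⟨v, hv, hTxv.trans <|
      (mul_le_of_le_one_right (hσ0 n) (mem_closedBall_zero_iff.mp hx)).trans hδ.le⟩
  refine csInf_eq_of_forall_ge_of_forall_gt_exists_lt ⟨_, hadmissible _ (lt_add_one _)⟩ ?_
    fun w hw => ⟨(σ n + w) / 2, hadmissible _ (by linarith), by linarith⟩
  rintro δ ⟨hδ, F, _, hF, hsub⟩
  obtain hσn_zero | hσn := (hσ0 n).eq_or_lt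
  · linarith
  refine le_of_forall_mem_of_subset_smul_closedBall_add ?_ (hσ0 n) hδ.le
    (fun y hy hyn => mem_image_closedBall_of_mem_span_of_diagonal e f hσanti hT hσn hy hyn) hsub
  rw [f.finrank_span_finset_image, Finset.card_range]
  omega

/-- For a diagonal operator `T` between separable Hilbert spaces, `T e_n = σ_n f_n` with
`σ` nonincreasing, nonnegative, tending to `0`, the `n`-th Kolmogorov diameter of
`T(B_H)` with respect to `B_K` equals `σ_n`. -/
theorem stmt_14 {H K : Type*}
    [NormedAddCommGroup H] [InnerProductSpace ℂ H]
    [NormedAddCommGroup K] [InnerProductSpace ℂ K]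
    (e : HilbertBasis ℕ ℂ H) (f : HilbertBasis ℕ ℂ K)
    (T : H →L[ℂ] K) (σ : ℕ → ℝ)
    (hσanti : Antitone σ) (hσ0 : ∀ n, 0 ≤ σ n)
    (hσlim : Tendsto σ atTop (nhds 0))
    (hT : ∀ n : ℕ, T (e n) = (σ n : ℂ) • f n) :
    ∀ n : ℕ, kolDiam n (T '' Metric.closedBall 0 1) (Metric.closedBall 0 1) = σ n :=
  stmt_14_general e f T σ hσanti hσ0 hT
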